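/- In the Gaudin realization, the global raising operator X⁺_gl = ∑_{a=1}^{N} X⁺_a annihilates the Bethe vector Ψ_M(μ) = B_M(μ)Ω₊ provided the Bethe equations ∑_{a=1}^{N} ℓ_a/(μᵢ − z_a) − ∑_{j≠i} 2/(μᵢ − μⱼ) = 0 hold for i = 1,…,M. More precisely, without imposing the Bethe equations one has X⁺_gl Ψ_M(μ) = ∑_{i=1}^{M} ρ_M(μᵢ; μ^(i)) Ψ^(1)_{M−1}(μ^(i)), where ρ_M(μᵢ; μ^(i)) is the left side of the i-th Bethe equation and Ψ^(1)_{M−1}(μ^(i)) = B^(1)_{M−1}(μ^(i))Ω₊. -/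

import Mathlib

/-!
Write `E = ∑ₐ X⁺ₐ`. The local sl₂ relations make `E`, `X⁻(λ)` and `h(λ)` satisfy
`[E, X⁻(λ)] = h(λ)`, `[h(μ), X⁻(ν)] = 2/(μ−ν) (X⁻(μ) − X⁻(ν)) + ξ h(ν)` and
`[X⁻(μ), X⁻(ν)] = ξ (X⁻(ν) − X⁻(μ))`; the last one says that adjacent factors of `B^(k)` commute,
so `B^(k)` is symmetric in its arguments. Commuting `h(μ)` and then `E` through
`B^(k)(ν) = (X⁻(ν₀) + kξ) B^(k+1)(ν₁, …)` down to `Ω₊`, induction on the length gives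
`h(μ) B^(k)(ν) Ω₊ = ρ(μ; ν) B^(k)(ν) Ω₊ + ∑ᵢ 2/(μ−νᵢ) B^(k)(ν[νᵢ := μ]) Ω₊ + ξ E B^(k)(ν) Ω₊`
and then `E B^(k)(ν) Ω₊ = ∑ᵢ ρ(νᵢ; ν^(i)) B^(k+1)(ν^(i)) Ω₊`.
-/

open Finset

/-- The operators B^(k)_M(μ₁,…,μ_M) = ∏_{n=k}^{M+k−1} (X⁻(μ_{n−k+1}) + nξ),
    as an ordered product (left to right), B^(k)_0 = 1. -/
noncomputable def Bop {A : Type*} [Ring A] [Module ℂ A]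
    (Xm : ℂ → A) (ξ : ℂ) : ℕ → List ℂ → A
  | _, [] => 1
  | k, μ :: t => (Xm μ + ((k : ℂ) * ξ) • (1 : A)) * Bop Xm ξ (k + 1) t

/-- the argument tuple μ with the i-th entry removed (in increasing index order) -/
noncomputable def rmv {M : ℕ} (μ : Fin M → ℂ) (i : Fin M) : List ℂ :=
  ((Finset.univ.erase i).sort (· ≤ ·)).map μ

/-- the twisted Gaudin loop generator X⁻(λ) = ∑_a (X⁻_a/(λ−z_a) − (ξ/2)h_a) -/
noncomputable def XmGaudin {H : Type*} [AddCommGroup H] [Module ℂ H] {N : ℕ}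
    (z : Fin N → ℂ) (ξ : ℂ) (XmA hA : Fin N → Module.End ℂ H) (lam : ℂ) :
    Module.End ℂ H :=
  ∑ a, ((lam - z a)⁻¹ • XmA a - (ξ / 2) • hA a)

attribute [local instance] LieRing.ofAssociativeRing

theorem sum_lie_sum_of_ne {L ι : Type*} [LieRing L] [Fintype ι] (f g : ι → L)
    (h : ∀ a b, a ≠ b → ⁅f a, g b⁆ = 0) :
    ⁅∑ a, f a, ∑ b, g b⁆ = ∑ a, ⁅f a, g a⁆ := by
  rw [sum_lie]
  exact sum_congr rfl fun a _ => (lie_sum _ _ _).trans <|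
    sum_eq_single a (fun b _ hba => h a b hba.symm) (by simp)

theorem lie_add_smul_one {R A : Type*} [CommRing R] [Ring A] [Algebra R A] (x y : A) (c : R) :
    ⁅x, y + c • 1⁆ = ⁅x, y⁆ := by
  simp [Ring.lie_def, mul_add, add_mul]

theorem add_smul_one_mul_add_smul_one_comm {R A : Type*} [CommRing R] [Ring A] [Algebra R A]
    {x y : A} {ξ : R} (h : ⁅x, y⁆ = ξ • (y - x)) (c : R) :
    (x + c • 1) * (y + (c + ξ) • 1) = (y + c • 1) * (x + (c + ξ) • 1) := by
  rw [Ring.lie_def, sub_eq_iff_eq_add] at h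
  simp only [mul_add, add_mul, smul_mul_assoc, mul_smul_comm, one_mul, mul_one, h]
  module

theorem Module.End.apply_apply_eq_apply_apply_add_lie {R M : Type*} [Semiring R] [AddCommGroup M]
    [Module R M] (f g : Module.End R M) (v : M) : f (g v) = g (f v) + ⁅f, g⁆ v := by
  rw [Ring.lie_def, LinearMap.sub_apply, Module.End.mul_apply, Module.End.mul_apply]
  abel

theorem List.ofFn_succ_succAbove {α : Type*} {n : ℕ} (ν : Fin (n + 2) → α) (j : Fin (n + 1)) :
    List.ofFn (fun i => ν (j.succ.succAbove i)) =
      ν 0 :: List.ofFn (fun i => ν (j.succAbove i).succ) := by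
  rw [List.ofFn_succ]
  simp only [Fin.succ_succAbove_zero, Fin.succ_succAbove_succ]

theorem Fin.sum_erase_eq_sum_succAbove {M : Type*} [AddCommGroup M] {n : ℕ}
    (f : Fin (n + 1) → M) (i : Fin (n + 1)) :
    ∑ j ∈ univ.erase i, f j = ∑ j, f (i.succAbove j) := by
  rw [sum_erase_eq_sub (mem_univ i), Fin.sum_univ_succAbove f i, add_sub_cancel_left]

theorem List.ofFn_update_zero {α : Type*} {n : ℕ} (t : Fin (n + 1) → α) (x : α) :
    List.ofFn (Function.update t 0 x) = x :: List.ofFn fun i => t i.succ := by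
  simp [List.ofFn_succ, Fin.succ_ne_zero]

theorem List.ofFn_update_succ {α : Type*} {n : ℕ} (t : Fin (n + 1) → α) (j : Fin n) (x : α) :
    List.ofFn (Function.update t j.succ x) =
      t 0 :: List.ofFn (Function.update (fun i => t i.succ) j x) := by
  rw [List.ofFn_succ, Function.update_of_ne (Fin.succ_ne_zero j).symm]
  congr 2
  exact Function.update_comp_eq_of_injective t (Fin.succ_injective n) j x

section Bop

variable {A : Type*} [Ring A] [Algebra ℂ A] {Xm : ℂ → A} {ξ : ℂ}

theorem Bop_cons (k : ℕ) (μ : ℂ) (l : List ℂ) :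
    Bop Xm ξ k (μ :: l) = (Xm μ + ((k : ℂ) * ξ) • 1) * Bop Xm ξ (k + 1) l :=
  rfl

theorem Bop_cons_cons_comm (hXX : ∀ μ ν, ⁅Xm μ, Xm ν⁆ = ξ • (Xm ν - Xm μ))
    (k : ℕ) (μ ν : ℂ) (l : List ℂ) :
    Bop Xm ξ k (μ :: ν :: l) = Bop Xm ξ k (ν :: μ :: l) := by
  have hshift : ((k + 1 : ℕ) : ℂ) * ξ = (k : ℂ) * ξ + ξ := by push_cast; ring
  simp only [Bop, ← mul_assoc, hshift, add_smul_one_mul_add_smul_one_comm (hXX μ ν)]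

theorem Bop_ofFn_update (hXX : ∀ μ ν, ⁅Xm μ, Xm ν⁆ = ξ • (Xm ν - Xm μ)) (k : ℕ) {n : ℕ}
    (t : Fin (n + 1) → ℂ) (j : Fin (n + 1)) (x : ℂ) :
    Bop Xm ξ k (List.ofFn (Function.update t j x)) =
      Bop Xm ξ k (x :: List.ofFn fun i => t (j.succAbove i)) := by
  induction n generalizing k with
  | zero => rw [Fin.fin_one_eq_zero j, List.ofFn_update_zero]; rfl
  | succ n ih =>
    cases j using Fin.cases with
    | zero => rw [List.ofFn_update_zero]; rfl
    | succ j =>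
      rw [List.ofFn_update_succ, Bop_cons, ih, ← Bop_cons, Bop_cons_cons_comm hXX,
        List.ofFn_succ_succAbove]

end Bop

section BetheAnsatz

variable {H : Type*} [AddCommGroup H] [Module ℂ H]

/-- The relations of `E = X⁺_gl`, `X⁻(λ)` and `h(λ)`; the one between `h(μ)` and `X⁻(ν)` is only
asked for `μ ≠ ν` in a set `S` of spectral parameters avoiding the poles. -/
structure LoopRelations (E : Module.End ℂ H) (Xm h : ℂ → Module.End ℂ H) (ξ : ℂ) (S : Set ℂ) :
    Prop where
  lie_E_Xm : ∀ μ, ⁅E, Xm μ⁆ = h μ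
  lie_h_Xm : ∀ μ ∈ S, ∀ ν ∈ S, μ ≠ ν → ⁅h μ, Xm ν⁆ = (2 / (μ - ν)) • (Xm μ - Xm ν) + ξ • h ν
  lie_Xm_Xm : ∀ μ ν, ⁅Xm μ, Xm ν⁆ = ξ • (Xm ν - Xm μ)

/-- The paper's `ρ(μ; ν)`, the left side of a Bethe equation. -/
noncomputable def betheRho (Λ : ℂ → ℂ) (μ : ℂ) {n : ℕ} (ν : Fin n → ℂ) : ℂ :=
  Λ μ - ∑ j, 2 / (μ - ν j)

theorem betheRho_succ (Λ : ℂ → ℂ) (μ : ℂ) {n : ℕ} (ν : Fin (n + 1) → ℂ) :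
    betheRho Λ μ ν = betheRho Λ μ (fun j => ν j.succ) - 2 / (μ - ν 0) := by
  simp only [betheRho, Fin.sum_univ_succ]
  ring

variable {E : Module.End ℂ H} {Xm h : ℂ → Module.End ℂ H} {ξ : ℂ} {S : Set ℂ} {Λ : ℂ → ℂ}
  {Ω : H}

namespace LoopRelations

theorem E_apply_Bop_cons (hL : LoopRelations E Xm h ξ S) (k : ℕ) (μ : ℂ) (l : List ℂ) (v : H) :
    E (Bop Xm ξ k (μ :: l) v) =
      (Xm μ + ((k : ℂ) * ξ) • 1) (E (Bop Xm ξ (k + 1) l v)) + h μ (Bop Xm ξ (k + 1) l v) := by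
  rw [Bop_cons, Module.End.mul_apply, Module.End.apply_apply_eq_apply_apply_add_lie,
    lie_add_smul_one, hL.lie_E_Xm]

theorem h_apply_Bop_cons (hL : LoopRelations E Xm h ξ S) {μ ν : ℂ} (hμ : μ ∈ S) (hν : ν ∈ S)
    (hμν : μ ≠ ν) (k : ℕ) (l : List ℂ) (v : H) :
    h μ (Bop Xm ξ k (ν :: l) v) =
      (Xm ν + ((k : ℂ) * ξ) • 1) (h μ (Bop Xm ξ (k + 1) l v))
      + (2 / (μ - ν)) • (Xm μ (Bop Xm ξ (k + 1) l v) - Xm ν (Bop Xm ξ (k + 1) l v))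
      + ξ • h ν (Bop Xm ξ (k + 1) l v) := by
  rw [Bop_cons, Module.End.mul_apply, Module.End.apply_apply_eq_apply_apply_add_lie,
    lie_add_smul_one, hL.lie_h_Xm μ hμ ν hν hμν]
  simp only [LinearMap.add_apply, LinearMap.smul_apply, LinearMap.sub_apply, add_assoc]

theorem h_apply_Bop (hL : LoopRelations E Xm h ξ S) (hE : E Ω = 0)
    (hΩ : ∀ μ ∈ S, h μ Ω = Λ μ • Ω) {μ : ℂ} (hμ : μ ∈ S) {n : ℕ} (ν : Fin n → ℂ)
    (hν : ∀ j, ν j ∈ S) (hμν : ∀ j, μ ≠ ν j) (k : ℕ) :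
    h μ (Bop Xm ξ k (List.ofFn ν) Ω) =
      betheRho Λ μ ν • Bop Xm ξ k (List.ofFn ν) Ω
      + ∑ i, (2 / (μ - ν i)) • Bop Xm ξ k (List.ofFn (Function.update ν i μ)) Ω
      + ξ • E (Bop Xm ξ k (List.ofFn ν) Ω) := by
  induction n generalizing k with
  | zero => simp [Bop, betheRho, hΩ μ hμ, hE]
  | succ n ih =>
    rw [List.ofFn_succ, hL.h_apply_Bop_cons hμ (hν 0) (hμν 0), hL.E_apply_Bop_cons,
      ih _ (fun j => hν j.succ) (fun j => hμν j.succ), Fin.sum_univ_succ, betheRho_succ]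
    simp only [List.ofFn_update_zero, List.ofFn_update_succ, Bop_cons, Module.End.mul_apply,
      map_add, map_smul, map_sum, LinearMap.add_apply, LinearMap.smul_apply,
      Module.End.one_apply]
    module

theorem E_apply_Bop (hL : LoopRelations E Xm h ξ S) (hE : E Ω = 0)
    (hΩ : ∀ μ ∈ S, h μ Ω = Λ μ • Ω) {n : ℕ} (ν : Fin (n + 1) → ℂ) (hν : ∀ j, ν j ∈ S)
    (hinj : Function.Injective ν) (k : ℕ) :
    E (Bop Xm ξ k (List.ofFn ν) Ω) =
      ∑ i, betheRho Λ (ν i) (fun j => ν (i.succAbove j)) •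
        Bop Xm ξ (k + 1) (List.ofFn fun j => ν (i.succAbove j)) Ω := by
  induction n generalizing k with
  | zero =>
    rw [List.ofFn_succ, hL.E_apply_Bop_cons]
    simp [Bop, hE, hΩ _ (hν 0), betheRho]
  | succ n ih =>
    rw [List.ofFn_succ, hL.E_apply_Bop_cons, hL.h_apply_Bop hE hΩ (hν 0) _ (fun j => hν j.succ)
      (fun j => hinj.ne (Fin.succ_ne_zero j).symm),
      ih _ (fun j => hν j.succ) (hinj.comp (Fin.succ_injective _)),
      Fin.sum_univ_succ (n := n + 1)]
    -- `Bop_ofFn_update` moves `ν 0`, substituted for `ν j.succ` by `h_apply_Bop`, to the front.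
    simp only [Fin.succAbove_zero, List.ofFn_succ_succAbove, betheRho_succ,
      Fin.succ_succAbove_zero, Fin.succ_succAbove_succ, Bop_ofFn_update hL.lie_Xm_Xm, Bop_cons,
      Module.End.mul_apply, map_sum, map_smul, smul_sum]
    rw [add_left_comm, add_assoc, ← sum_add_distrib, ← sum_add_distrib]
    congr 1
    refine sum_congr rfl fun j _ => ?_
    simp only [LinearMap.add_apply, LinearMap.smul_apply, Module.End.one_apply, Nat.cast_add,
      Nat.cast_one]
    have hflip : 2 / (ν j.succ - ν 0) = -(2 / (ν 0 - ν j.succ)) := by rw [← div_neg, neg_sub]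
    rw [hflip]
    module

end LoopRelations

end BetheAnsatz

section Gaudin

variable {H : Type*} [AddCommGroup H] [Module ℂ H] {N : ℕ} (z : Fin N → ℂ) (ξ : ℂ)
  {hA XpA XmA : Fin N → Module.End ℂ H}

noncomputable def hGaudin (hA XpA : Fin N → Module.End ℂ H) (lam : ℂ) : Module.End ℂ H :=
  ∑ a, ((lam - z a)⁻¹ • hA a + ξ • XpA a)

theorem lie_sum_XpA_XmGaudin
    (hhXp : ∀ a b, ⁅hA a, XpA b⁆ = if a = b then (2 : ℂ) • XpA a else 0)
    (hXpXm : ∀ a b, ⁅XpA a, XmA b⁆ = if a = b then hA a else 0) (μ : ℂ) :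
    ⁅∑ a, XpA a, XmGaudin z ξ XmA hA μ⁆ = hGaudin z ξ hA XpA μ := by
  have hXph : ∀ a b, ⁅XpA a, hA b⁆ = -⁅hA b, XpA a⁆ := fun _ _ => (lie_skew _ _).symm
  rw [XmGaudin, sum_lie_sum_of_ne, hGaudin]
  · refine sum_congr rfl fun a _ => ?_
    simp only [lie_sub, lie_smul, hXpXm, hXph, hhXp, if_pos]
    module
  · intro a b hab
    simp [lie_sub, lie_smul, hXpXm, hXph, hhXp, hab, Ne.symm hab]

theorem lie_XmGaudin_XmGaudin
    (hhXm : ∀ a b, ⁅hA a, XmA b⁆ = if a = b then (-2 : ℂ) • XmA a else 0)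
    (hhh : ∀ a b, ⁅hA a, hA b⁆ = 0) (hXmXm : ∀ a b, ⁅XmA a, XmA b⁆ = 0) (μ ν : ℂ) :
    ⁅XmGaudin z ξ XmA hA μ, XmGaudin z ξ XmA hA ν⁆ =
      ξ • (XmGaudin z ξ XmA hA ν - XmGaudin z ξ XmA hA μ) := by
  have hXmh : ∀ a b, ⁅XmA a, hA b⁆ = -⁅hA b, XmA a⁆ := fun _ _ => (lie_skew _ _).symm
  rw [XmGaudin, XmGaudin, sum_lie_sum_of_ne, ← sum_sub_distrib, smul_sum]
  · refine sum_congr rfl fun a _ => ?_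
    simp only [lie_sub, sub_lie, lie_smul, smul_lie, hXmXm, hhh, hXmh, hhXm, if_pos]
    module
  · intro a b hab
    simp [lie_sub, sub_lie, lie_smul, smul_lie, hXmXm, hhh, hXmh, hhXm, hab, Ne.symm hab]

theorem lie_hGaudin_XmGaudin
    (hhXp : ∀ a b, ⁅hA a, XpA b⁆ = if a = b then (2 : ℂ) • XpA a else 0)
    (hhXm : ∀ a b, ⁅hA a, XmA b⁆ = if a = b then (-2 : ℂ) • XmA a else 0)
    (hXpXm : ∀ a b, ⁅XpA a, XmA b⁆ = if a = b then hA a else 0)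
    (hhh : ∀ a b, ⁅hA a, hA b⁆ = 0) {μ ν : ℂ} (hμ : μ ∉ Set.range z) (hν : ν ∉ Set.range z)
    (hμν : μ ≠ ν) :
    ⁅hGaudin z ξ hA XpA μ, XmGaudin z ξ XmA hA ν⁆ =
      (2 / (μ - ν)) • (XmGaudin z ξ XmA hA μ - XmGaudin z ξ XmA hA ν)
        + ξ • hGaudin z ξ hA XpA ν := by
  have hXph : ∀ a b, ⁅XpA a, hA b⁆ = -⁅hA b, XpA a⁆ := fun _ _ => (lie_skew _ _).symm
  rw [hGaudin, XmGaudin, sum_lie_sum_of_ne, XmGaudin, hGaudin, ← sum_sub_distrib, smul_sum,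
    smul_sum, ← sum_add_distrib]
  · refine sum_congr rfl fun a _ => ?_
    have hμa : μ - z a ≠ 0 := sub_ne_zero.mpr fun h => hμ ⟨a, h.symm⟩
    have hνa : ν - z a ≠ 0 := sub_ne_zero.mpr fun h => hν ⟨a, h.symm⟩
    have hμν' : μ - ν ≠ 0 := sub_ne_zero.mpr hμν
    simp only [lie_sub, add_lie, lie_smul, smul_lie, hhh, hXph, hhXm, hXpXm, hhXp, if_pos]
    match_scalars <;> field_simp <;> ring
  · intro a b hab
    simp [lie_sub, add_lie, lie_smul, smul_lie, hhh, hXph, hhXm, hXpXm, hhXp, hab, Ne.symm hab]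

theorem loopRelations_gaudin
    (hhXp : ∀ a b, ⁅hA a, XpA b⁆ = if a = b then (2 : ℂ) • XpA a else 0)
    (hhXm : ∀ a b, ⁅hA a, XmA b⁆ = if a = b then (-2 : ℂ) • XmA a else 0)
    (hXpXm : ∀ a b, ⁅XpA a, XmA b⁆ = if a = b then hA a else 0)
    (hhh : ∀ a b, ⁅hA a, hA b⁆ = 0) (hXmXm : ∀ a b, ⁅XmA a, XmA b⁆ = 0) :
    LoopRelations (∑ a, XpA a) (XmGaudin z ξ XmA hA) (hGaudin z ξ hA XpA) ξ (Set.range z)ᶜ where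
  lie_E_Xm := lie_sum_XpA_XmGaudin z ξ hhXp hXpXm
  lie_h_Xm _ hμ _ hν hμν := lie_hGaudin_XmGaudin z ξ hhXp hhXm hXpXm hhh hμ hν hμν
  lie_Xm_Xm := lie_XmGaudin_XmGaudin z ξ hhXm hhh hXmXm

theorem hGaudin_apply (ℓ : Fin N → ℂ) {Ω : H} (hΩp : ∀ a, XpA a Ω = 0)
    (hΩh : ∀ a, hA a Ω = ℓ a • Ω) (μ : ℂ) :
    hGaudin z ξ hA XpA μ Ω = (∑ a, ℓ a / (μ - z a)) • Ω := by
  simp [hGaudin, hΩp, hΩh, sum_smul, smul_smul, div_eq_inv_mul]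

end Gaudin

theorem rmv_eq_ofFn {n : ℕ} (μ : Fin (n + 1) → ℂ) (i : Fin (n + 1)) :
    rmv μ i = List.ofFn fun j => μ (i.succAbove j) := by
  have hcard : ({i}ᶜ : Finset (Fin (n + 1))).card = n := by simp [card_compl]
  rw [rmv, ← compl_singleton, ← listMap_orderEmbOfFin_finRange _ hcard,
    orderEmbOfFin_compl_singleton_eq_succAboveOrderEmb, List.map_map, List.ofFn_eq_map]
  rfl

theorem Xp_global_on_Bethe_vector_general
    {H : Type*} [AddCommGroup H] [Module ℂ H]
    (N : ℕ) (z ℓ : Fin N → ℂ) (ξ : ℂ)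
    (hA XpA XmA : Fin N → Module.End ℂ H)
    (hhh : ∀ a b, hA a * hA b = hA b * hA a)
    (hhXp : ∀ a b, hA a * XpA b - XpA b * hA a = if a = b then (2 : ℂ) • XpA a else 0)
    (hhXm : ∀ a b, hA a * XmA b - XmA b * hA a = if a = b then (-2 : ℂ) • XmA a else 0)
    (hXpXm : ∀ a b, XpA a * XmA b - XmA b * XpA a = if a = b then hA a else 0)
    (hXmXm : ∀ a b, XmA a * XmA b = XmA b * XmA a)
    (Ω : H) (hΩp : ∀ a, XpA a Ω = 0) (hΩh : ∀ a, hA a Ω = ℓ a • Ω)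
    (M : ℕ) (μ : Fin (M + 1) → ℂ) (hμ : Function.Injective μ)
    (hdisj : ∀ i a, μ i ≠ z a) :
    ((∑ a, XpA a) (Bop (XmGaudin z ξ XmA hA) ξ 0 (List.ofFn μ) Ω) =
      ∑ i, ((∑ a, ℓ a / (μ i - z a)) - ∑ j ∈ Finset.univ.erase i, 2 / (μ i - μ j)) •
        (Bop (XmGaudin z ξ XmA hA) ξ 1 (rmv μ i) Ω)) ∧
    ((∀ i, (∑ a, ℓ a / (μ i - z a)) - ∑ j ∈ Finset.univ.erase i, 2 / (μ i - μ j) = 0) →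
      (∑ a, XpA a) (Bop (XmGaudin z ξ XmA hA) ξ 0 (List.ofFn μ) Ω) = 0) := by
  have hL := loopRelations_gaudin z ξ
    (fun a b => (Ring.lie_def _ _).trans (hhXp a b))
    (fun a b => (Ring.lie_def _ _).trans (hhXm a b))
    (fun a b => (Ring.lie_def _ _).trans (hXpXm a b))
    (fun a b => by rw [Ring.lie_def, hhh, sub_self])
    (fun a b => by rw [Ring.lie_def, hXmXm, sub_self])
  have hoff : (∑ a, XpA a) (Bop (XmGaudin z ξ XmA hA) ξ 0 (List.ofFn μ) Ω) =
      ∑ i, ((∑ a, ℓ a / (μ i - z a)) - ∑ j ∈ Finset.univ.erase i, 2 / (μ i - μ j)) •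
        (Bop (XmGaudin z ξ XmA hA) ξ 1 (rmv μ i) Ω) := by
    rw [hL.E_apply_Bop (Λ := fun lam => ∑ a, ℓ a / (lam - z a)) (by simp [hΩp])
      (fun lam _ => hGaudin_apply z ξ ℓ hΩp hΩh lam) μ (fun i ⟨a, ha⟩ => hdisj i a ha.symm) hμ]
    refine sum_congr rfl fun i _ => ?_
    simp only [betheRho, Fin.sum_erase_eq_sum_succAbove, rmv_eq_ofFn]
  refine ⟨hoff, fun hBethe => ?_⟩
  rw [hoff]
  exact sum_eq_zero fun i _ => by rw [hBethe i, zero_smul]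

/-- off shell,
    X⁺_gl Ψ_M(μ) = ∑_i ρ_M(μᵢ; μ^(i)) Ψ^(1)_{M−1}(μ^(i)),
    and hence X⁺_gl annihilates the Bethe vector when the Bethe equations hold. -/
theorem Xp_global_on_Bethe_vector
    {H : Type*} [AddCommGroup H] [Module ℂ H]
    (N : ℕ) (z ℓ : Fin N → ℂ) (hz : Function.Injective z) (ξ : ℂ)
    (hA XpA XmA : Fin N → Module.End ℂ H)
    (hhh : ∀ a b, hA a * hA b = hA b * hA a)
    (hhXp : ∀ a b, hA a * XpA b - XpA b * hA a = if a = b then (2 : ℂ) • XpA a else 0)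
    (hhXm : ∀ a b, hA a * XmA b - XmA b * hA a = if a = b then (-2 : ℂ) • XmA a else 0)
    (hXpXm : ∀ a b, XpA a * XmA b - XmA b * XpA a = if a = b then hA a else 0)
    (hXpXp : ∀ a b, XpA a * XpA b = XpA b * XpA a)
    (hXmXm : ∀ a b, XmA a * XmA b = XmA b * XmA a)
    (Ω : H) (hΩp : ∀ a, XpA a Ω = 0) (hΩh : ∀ a, hA a Ω = ℓ a • Ω)
    (M : ℕ) (μ : Fin (M + 1) → ℂ) (hμ : Function.Injective μ)
    (hdisj : ∀ i a, μ i ≠ z a) :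
    ((∑ a, XpA a) (Bop (XmGaudin z ξ XmA hA) ξ 0 (List.ofFn μ) Ω) =
      ∑ i, ((∑ a, ℓ a / (μ i - z a)) - ∑ j ∈ Finset.univ.erase i, 2 / (μ i - μ j)) •
        (Bop (XmGaudin z ξ XmA hA) ξ 1 (rmv μ i) Ω)) ∧
    ((∀ i, (∑ a, ℓ a / (μ i - z a)) - ∑ j ∈ Finset.univ.erase i, 2 / (μ i - μ j) = 0) →
      (∑ a, XpA a) (Bop (XmGaudin z ξ XmA hA) ξ 0 (List.ofFn μ) Ω) = 0) :=
  Xp_global_on_Bethe_vector_general N z ℓ ξ hA XpA XmA hhh hhXp hhXm hXpXm hXmXm Ω hΩp hΩh M μ hμ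
    hdisj
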